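/- arXiv:1110.2117 — 2 statements merged into one kernel-verified Lean document; each statement's English description precedes it below -/
import Mathlib

section
/- Let F be a generic step skew product over a transitive subshift of finite type and μ an ergodic stationary measure of the associated random walk Π(F). Then for any two symbols k, k' and any ε > 0 there exist admissible compositions G_A, G_B : I_k → I_{k'} such that G_A(I_{μ,k}) ⊆ U_ε(A_{μ,k'}) and G_B(I_{μ,k}) ⊆ U_ε(B_{μ,k'}), where U_ε denotes the ε-neighborhood. -/
open MeasureTheory Set Filter Topology
open scoped ENNReal

namespace PaperSSP

/-- Data of a step skew product over a transitive subshift of finite type, together with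
the transition probabilities and stationary distribution defining a Markov measure. -/
structure Sys (N : ℕ) where
  /-- transition (0-1) matrix of the subshift -/
  A : Fin N → Fin N → Bool
  /-- fiber maps -/
  f : Fin N → ℝ → ℝ
  /-- stochastic transition matrix -/
  P : Fin N → Fin N → ℝ
  /-- stationary distribution -/
  p : Fin N → ℝ
  transitive : ∃ n : ℕ, 0 < n ∧ ∀ i j : Fin N,
    0 < (((Matrix.of fun i j => if A i j then (1 : ℕ) else 0)) ^ n) i j
  f_meas : ∀ k, Measurable (f k)
  f_contDiff : ∀ k, ContDiffOn ℝ 1 (f k) (Icc 0 1)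
  f_mono : ∀ k, StrictMonoOn (f k) (Icc 0 1)
  f_deriv_pos : ∀ k, ∀ x ∈ Icc (0:ℝ) 1, 0 < derivWithin (f k) (Icc 0 1) x
  f_into : ∀ k, MapsTo (f k) (Icc 0 1) (Ioo 0 1)
  P_nonneg : ∀ i j, 0 ≤ P i j
  P_row : ∀ i, ∑ j, P i j = 1
  P_pos_iff : ∀ i j, (0 < P i j ↔ A i j = true)
  p_nonneg : ∀ i, 0 ≤ p i
  p_sum : ∑ i, p i = 1
  p_stationary : ∀ j, ∑ i, P i j * p i = p j

variable {N : ℕ}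

/-- The two-sided shift space `Σ`. -/
abbrev Sig (S : Sys N) : Type := {ω : ℤ → Fin N // ∀ n : ℤ, S.A (ω n) (ω (n + 1)) = true}

/-- The left shift `σ` on `Σ`. -/
def shift (S : Sys N) (ω : Sig S) : Sig S := ⟨fun n => ω.1 (n + 1), fun n => ω.2 (n + 1)⟩

/-- The step skew product `F (ω, x) = (σ ω, f_{ω₀} x)`. -/
def Fmap (S : Sys N) : Sig S × ℝ → Sig S × ℝ := fun q => (shift S q.1, S.f (q.1.1 0) q.2)

/-- `ν` is the Markov measure on `Σ` given by the cylinder formula. -/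
def IsMarkovMeasure (S : Sys N) (ν : Measure (Sig S)) : Prop :=
  IsProbabilityMeasure ν ∧
  ∀ k m : ℤ, k ≤ m → ∀ w : ℤ → Fin N,
    ν {ω : Sig S | ∀ i : ℤ, k ≤ i → i ≤ m → ω.1 i = w i} =
      ENNReal.ofReal (S.p (w k) * ∏ i ∈ Finset.Icc k (m - 1), S.P (w i) (w (i + 1)))

/-- Admissibility of a pair of symbols. -/
def Adm (S : Sys N) (i j : Fin N) : Prop := S.A i j = true

/-- The composition `f_{w_n} ∘ ⋯ ∘ f_{w_1}` along a word `l = [w_1, …, w_n]`. -/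
def wordMap (S : Sys N) (l : List (Fin N)) : ℝ → ℝ := fun x => l.foldl (fun y k => S.f k y) x

/-- A simple return: an admissible word `w_1 … w_n` of pairwise distinct symbols with
`(w_n, w_1)` admissible; its map is `wordMap` of the word. -/
def IsSimpleReturn (S : Sys N) (l : List (Fin N)) : Prop :=
  l.Nodup ∧ l.Chain' (Adm S) ∧ ∃ a b, l.head? = some a ∧ l.getLast? = some b ∧ Adm S b a

/-- A simple transition: an admissible word `w_1 … w_{n+1}` (n ≥ 1) of pairwise distinct
symbols; its map is `transMap`, going from `I_{w_1}` to `I_{w_{n+1}}`. -/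
def IsSimpleTransition (S : Sys N) (t : List (Fin N)) : Prop :=
  2 ≤ t.length ∧ t.Nodup ∧ t.Chain' (Adm S)

/-- The map `f_{w_n} ∘ ⋯ ∘ f_{w_1}` of the transition word `t = w_1 … w_{n+1}`. -/
def transMap (S : Sys N) (t : List (Fin N)) : ℝ → ℝ := wordMap S t.dropLast

/-- Attracting (hyperbolic) fixed point. -/
def IsAttrFP (g : ℝ → ℝ) (x : ℝ) : Prop := g x = x ∧ deriv g x < 1

/-- Repelling (hyperbolic) fixed point. -/
def IsRepFP (g : ℝ → ℝ) (x : ℝ) : Prop := g x = x ∧ 1 < deriv g x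

/-- The genericity conditions (1)–(3). -/
def IsGeneric (S : Sys N) : Prop :=
  (∀ l, IsSimpleReturn S l → ∀ x ∈ Icc (0:ℝ) 1, wordMap S l x = x →
      deriv (wordMap S l) x ≠ 1) ∧
  (∀ l t l', IsSimpleReturn S l → IsSimpleTransition S t → IsSimpleReturn S l' →
      t.head? = l.head? → t.getLast? = l'.head? → ∀ x ∈ Icc (0:ℝ) 1,
      (IsAttrFP (wordMap S l) x → ¬ IsRepFP (wordMap S l') (transMap S t x)) ∧
      (IsRepFP (wordMap S l) x → ¬ IsAttrFP (wordMap S l') (transMap S t x))) ∧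
  ¬ ∃ a : Fin N → ℝ, (∀ k, a k ∈ Icc (0:ℝ) 1) ∧ ∀ i j, Adm S i j → S.f i (a i) = a j

/-- The strip between two graphs. -/
def Strip (S : Sys N) (φ₁ φ₂ : Sig S → ℝ) : Set (Sig S × ℝ) :=
  {q | φ₁ q.1 ≤ q.2 ∧ q.2 ≤ φ₂ q.1}

/-- A strip `S_{φ₁, φ₂}` with `φ₁ < φ₂` continuous, `I`-valued. -/
def IsStrip (S : Sys N) (T : Set (Sig S × ℝ)) : Prop :=
  ∃ φ₁ φ₂ : Sig S → ℝ, Continuous φ₁ ∧ Continuous φ₂ ∧ (∀ ω, φ₁ ω ∈ Icc (0:ℝ) 1) ∧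
    (∀ ω, φ₂ ω ∈ Icc (0:ℝ) 1) ∧ (∀ ω, φ₁ ω < φ₂ ω) ∧ T = Strip S φ₁ φ₂

/-- Trapping strip: `F(S) ⊆ int S`. -/
def IsTrappingStrip (S : Sys N) (T : Set (Sig S × ℝ)) : Prop :=
  IsStrip S T ∧ Fmap S '' T ⊆ interior T

/-- Inverse trapping strip: `F⁻¹(S) ⊆ int S`. -/
def IsInvTrappingStrip (S : Sys N) (T : Set (Sig S × ℝ)) : Prop :=
  IsStrip S T ∧ Fmap S ⁻¹' T ⊆ interior T

/-- The maximal attractor `⋂ₙ Fⁿ(T)` of a (trapping) strip. -/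
def Amax (S : Sys N) (T : Set (Sig S × ℝ)) : Set (Sig S × ℝ) := ⋂ n : ℕ, (Fmap S)^[n] '' T

/-- The repeller `⋂ₙ F⁻ⁿ(T)` of an (inverse trapping) strip. -/
def Repel (S : Sys N) (T : Set (Sig S × ℝ)) : Set (Sig S × ℝ) := ⋂ n : ℕ, (Fmap S)^[n] ⁻¹' T

/-- The metric `d(ω, ω') = 2^{-min{|n| : ωₙ ≠ ω'ₙ}}` on `Σ`. -/
noncomputable def dS (S : Sys N) (ω ω' : Sig S) : ℝ :=
  letI := Classical.propDecidable (ω = ω')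
  if ω = ω' then 0
  else (2:ℝ) ^ (-((sInf {k : ℕ | ∃ n : ℤ, n.natAbs = k ∧ ω.1 n ≠ ω'.1 n} : ℕ) : ℤ))

/-- The fiber `B_ω` of a subset of `Σ × ℝ`. -/
def fiber {S : Sys N} (B : Set (Sig S × ℝ)) (ω : Sig S) : Set ℝ := {x | (ω, x) ∈ B}

/-- A bony graph w.r.t. `ν`: closed, every fiber a closed interval, a.e. fiber a point. -/
def IsBony (S : Sys N) (ν : Measure (Sig S)) (B : Set (Sig S × ℝ)) : Prop :=
  IsClosed B ∧ (∀ ω, ∃ a b : ℝ, a ≤ b ∧ fiber B ω = Icc a b) ∧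
  ∀ᵐ ω ∂ν, ∃ x, fiber B ω = {x}

/-- A continuous-bony graph: a bony graph with upper-semicontinuous fibers. -/
def IsCBG (S : Sys N) (ν : Measure (Sig S)) (B : Set (Sig S × ℝ)) : Prop :=
  IsBony S ν B ∧ ∀ ω : Sig S, ∀ ε > (0:ℝ), ∃ δ > (0:ℝ), ∀ ω', dS S ω ω' < δ →
    ∀ x ∈ fiber B ω', ∃ y ∈ fiber B ω, |x - y| < ε

/-- The standard measure: product of `ν` with Lebesgue measure on the fiber. -/
noncomputable def stdMeas (S : Sys N) (ν : Measure (Sig S)) : Measure (Sig S × ℝ) :=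
  ν.prod (volume.restrict (Icc 0 1))

/-- A stationary measure of the random walk `Π(F)`, as a family `μ_k` of measures
on the fibers with total mass 1, supported on `I`, with `∑ᵢ π_{ij} (f_i)_* μ_i = μ_j`. -/
def IsStationary (S : Sys N) (μ : Fin N → Measure ℝ) : Prop :=
  (∀ k, IsFiniteMeasure (μ k)) ∧ (∑ k, μ k univ) = 1 ∧ (∀ k, μ k (Icc (0:ℝ) 1)ᶜ = 0) ∧
  ∀ j, μ j = ∑ i, ENNReal.ofReal (S.P i j) • (μ i).map (S.f i)

/-- Ergodic stationary measure: an extreme point of the convex set of stationary measures. -/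
def IsErgodicStationary (S : Sys N) (μ : Fin N → Measure ℝ) : Prop :=
  IsStationary S μ ∧ ∀ μ₁ μ₂ : Fin N → Measure ℝ, IsStationary S μ₁ → IsStationary S μ₂ →
    ∀ t : ℝ≥0∞, 0 < t → t < 1 → (∀ k, μ k = t • μ₁ k + (1 - t) • μ₂ k) → μ₁ = μ₂

/-- The (topological) support of a measure on `ℝ`. -/
def msupport (m : Measure ℝ) : Set ℝ := {x | ∀ ε > (0:ℝ), 0 < m (Ioo (x - ε) (x + ε))}

/-- `A_{μ,k} = min supp μ_k`. -/
noncomputable def Alow (m : Measure ℝ) : ℝ := sInf (msupport m)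

/-- `B_{μ,k} = max supp μ_k`. -/
noncomputable def Bhigh (m : Measure ℝ) : ℝ := sSup (msupport m)

/-- A domain: a disjoint union of nonempty subintervals `D_k ⊆ I_k`. -/
def IsDomain {N : ℕ} (D : Fin N → Set ℝ) : Prop :=
  ∀ k, (D k).Nonempty ∧ (D k).OrdConnected ∧ D k ⊆ Icc 0 1

/-- A trapping domain: `f_k(D_k) ⊆ int D_m` for all admissible `(k, m)`. -/
def IsTrappingDomain (S : Sys N) (D : Fin N → Set ℝ) : Prop :=
  IsDomain D ∧ ∀ k m, Adm S k m → S.f k '' D k ⊆ interior (D m)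

/-- A nonstrictly trapping domain: `f_k(D_k) ⊆ D_m` for all admissible `(k, m)`. -/
def IsNSTrappingDomain (S : Sys N) (D : Fin N → Set ℝ) : Prop :=
  IsDomain D ∧ ∀ k m, Adm S k m → S.f k '' D k ⊆ D m

/-- The one-sided shift space `Σ₊`. -/
abbrev Sig1 (S : Sys N) : Type := {ω : ℕ → Fin N // ∀ n : ℕ, S.A (ω n) (ω (n + 1)) = true}

/-- The one-sided left shift. -/
def shift1 (S : Sys N) (ω : Sig1 S) : Sig1 S := ⟨fun n => ω.1 (n + 1), fun n => ω.2 (n + 1)⟩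

/-- The one-sided skew product `F₊`. -/
def Fmap1 (S : Sys N) : Sig1 S × ℝ → Sig1 S × ℝ := fun q => (shift1 S q.1, S.f (q.1.1 0) q.2)

/-- The "forgetting the past" projection `π : Σ → Σ₊`. -/
def forget (S : Sys N) (ω : Sig S) : Sig1 S :=
  ⟨fun n => ω.1 n, fun n => by push_cast; exact ω.2 (n : ℤ)⟩

/-- The basin of a measure `m`: points whose time averages converge to `m`. -/
def Basin (S : Sys N) (m : Measure (Sig S × ℝ)) : Set (Sig S × ℝ) :=
  {q | ∀ g : C(Sig S × ℝ, ℝ),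
    Tendsto (fun n : ℕ => (∑ i ∈ Finset.range n, g ((Fmap S)^[i] q)) / n) atTop
      (𝓝 (∫ q', g q' ∂m))}



end PaperSSP

/-!
Fix `k` and let `c_j` be the infimum of `g (B_{μ,k})` over all admissible compositions `g` from
`I_k` to `I_j`. Since admissible compositions are closed under post-composition with `f_i` and
`f_i` is continuous, `c_j ≤ f_i (c_i)` for every admissible pair `(i, j)`, i.e. the family of
half-lines `{x < c_j}` is backward invariant. Comparing masses via stationarity upgrades this
inclusion to an almost sure equality, so the restrictions of `μ` to `{x < c_j}` and to
`{x ≥ c_j}` are both invariant under the walk, and ergodicity kills one of them. If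
`A_{μ,k'} < c_{k'}` the first one survives, hence `c_j = B_{μ,j}` for all `j` and
`f_i (B_{μ,i}) = B_{μ,j}` for every admissible pair, which genericity (3) forbids. So
`c_{k'} ≤ A_{μ,k'}`; as admissible compositions are monotone and map `I_{μ,k}` into `I_{μ,k'}`,
one with `g (B_{μ,k}) < A_{μ,k'} + ε` squeezes `I_{μ,k}` into `U_ε(A_{μ,k'})`. The statement
for `B` is symmetric.
-/

theorem ENNReal.sum_eq_sum_iff_of_le {ι : Type*} {s : Finset ι} {f g : ι → ℝ≥0∞}
    (hfg : ∀ i ∈ s, f i ≤ g i) (hg : ∑ i ∈ s, g i ≠ ∞) :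
    ∑ i ∈ s, f i = ∑ i ∈ s, g i ↔ ∀ i ∈ s, f i = g i := by
  have hg' : ∀ i ∈ s, g i ≠ ∞ := fun i hi => (ENNReal.lt_top_of_sum_ne_top hg hi).ne
  have hf' : ∀ i ∈ s, f i ≠ ∞ := fun i hi => ne_top_of_le_ne_top (hg' i hi) (hfg i hi)
  rw [← ENNReal.toNNReal_eq_toNNReal_iff' (ENNReal.sum_ne_top.2 hf') hg,
    ENNReal.toNNReal_sum hf', ENNReal.toNNReal_sum hg',
    Finset.sum_eq_sum_iff_of_le fun i hi => ENNReal.toNNReal_mono (hg' i hi) (hfg i hi)]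
  exact forall₂_congr fun i hi => ENNReal.toNNReal_eq_toNNReal_iff' (hf' i hi) (hg' i hi)

section OrderTopology

variable {α β : Type*} [ConditionallyCompleteLinearOrder α] [TopologicalSpace α]
  [OrderTopology α] [ConditionallyCompleteLinearOrder β] [TopologicalSpace β] [OrderTopology β]
  {f : α → β} {s : Set α} {t : Set β}

theorem csInf_le_map_csInf_of_mapsTo (hs : s.Nonempty) (hsb : BddBelow s) (htb : BddBelow t)
    (hf : ContinuousWithinAt f s (sInf s)) (hst : MapsTo f s t) : sInf t ≤ f (sInf s) :=
  closure_minimal (fun _ hy => csInf_le htb hy) isClosed_Ici <|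
    closure_mono hst.image_subset (hf.mem_closure_image (csInf_mem_closure hs hsb))

theorem map_csSup_le_csSup_of_mapsTo (hs : s.Nonempty) (hsb : BddAbove s) (htb : BddAbove t)
    (hf : ContinuousWithinAt f s (sSup s)) (hst : MapsTo f s t) : f (sSup s) ≤ sSup t :=
  closure_minimal (fun _ hy => le_csSup htb hy) isClosed_Iic <|
    closure_mono hst.image_subset (hf.mem_closure_image (csSup_mem_closure hs hsb))

end OrderTopology

namespace PaperSSP

theorem msupport_eq_support (m : Measure ℝ) : msupport m = m.support := by
  ext x
  rw [Measure.mem_support_iff_forall]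
  refine ⟨fun hx U hU => ?_, fun hx ε hε => hx _ (Ioo_mem_nhds (by linarith) (by linarith))⟩
  obtain ⟨ε, hε, hball⟩ := Metric.mem_nhds_iff.1 hU
  exact (hx ε hε).trans_le (measure_mono (by rwa [← Real.ball_eq_Ioo]))

theorem measure_Iio_pos_of_mem_msupport {m : Measure ℝ} {x c : ℝ} (hx : x ∈ msupport m)
    (hxc : x < c) : 0 < m (Iio c) :=
  (hx (c - x) (sub_pos.2 hxc)).trans_le (measure_mono fun y hy => show y < c by linarith [hy.2])

theorem measure_Ioi_pos_of_mem_msupport {m : Measure ℝ} {x c : ℝ} (hx : x ∈ msupport m)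
    (hcx : c < x) : 0 < m (Ioi c) :=
  (hx (x - c) (sub_pos.2 hcx)).trans_le (measure_mono fun y hy => show c < y by linarith [hy.1])

variable {N : ℕ} {S : Sys N}

theorem ofReal_P_eq_zero {i j : Fin N} (h : ¬ Adm S i j) : ENNReal.ofReal (S.P i j) = 0 :=
  ENNReal.ofReal_eq_zero.2 (not_lt.1 (mt (S.P_pos_iff i j).1 h))

theorem ofReal_P_ne_zero {i j : Fin N} (h : Adm S i j) : ENNReal.ofReal (S.P i j) ≠ 0 :=
  (ENNReal.ofReal_pos.2 ((S.P_pos_iff i j).2 h)).ne'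

theorem sum_ofReal_P (i : Fin N) : ∑ j, ENNReal.ofReal (S.P i j) = 1 := by
  rw [← ENNReal.ofReal_sum_of_nonneg fun j _ => S.P_nonneg i j, S.P_row, ENNReal.ofReal_one]

noncomputable def transfer (S : Sys N) (ν : Fin N → Measure ℝ) (j : Fin N) : Measure ℝ :=
  ∑ i, ENNReal.ofReal (S.P i j) • (ν i).map (S.f i)

theorem transfer_apply (ν : Fin N → Measure ℝ) (j : Fin N) {E : Set ℝ}
    (hE : MeasurableSet E) :
    transfer S ν j E = ∑ i, ENNReal.ofReal (S.P i j) * ν i (S.f i ⁻¹' E) := by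
  simp [transfer, Measure.map_apply (S.f_meas _) hE]

theorem transfer_smul (c : ℝ≥0∞) (ν : Fin N → Measure ℝ) (j : Fin N) :
    transfer S (fun i => c • ν i) j = c • transfer S ν j := by
  simp only [transfer, Measure.map_smul, Finset.smul_sum, smul_comm c]

theorem isStationary_inv_smul {ν : Fin N → Measure ℝ} {c : ℝ≥0∞}
    (hν : ∀ j, ν j = transfer S ν j) (hI : ∀ j, ν j (Icc (0:ℝ) 1)ᶜ = 0)
    (hc : ∑ j, ν j univ = c) (hc₀ : c ≠ 0) (hc_top : c ≠ ∞) :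
    IsStationary S fun j => c⁻¹ • ν j := by
  refine ⟨fun j => ⟨?_⟩, ?_, fun j => by simp [hI j], fun j => ?_⟩
  · rw [Measure.smul_apply, smul_eq_mul]
    exact ENNReal.mul_lt_top (ENNReal.inv_lt_top.2 (pos_iff_ne_zero.2 hc₀))
      (ENNReal.lt_top_of_sum_ne_top (f := fun j => ν j univ) (hc ▸ hc_top) (Finset.mem_univ j))
  · simp only [Measure.smul_apply, smul_eq_mul, ← Finset.mul_sum, hc,
      ENNReal.inv_mul_cancel hc₀ hc_top]
  · exact (congrArg _ (hν j)).trans (transfer_smul c⁻¹ ν j).symm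

namespace IsStationary

variable {μ : Fin N → Measure ℝ}

theorem eq_transfer (hμ : IsStationary S μ) (j : Fin N) : μ j = transfer S μ j :=
  hμ.2.2.2 j

theorem ae_mem_Icc (hμ : IsStationary S μ) (i : Fin N) : ∀ᵐ x ∂μ i, x ∈ Icc (0:ℝ) 1 :=
  mem_ae_iff.2 (hμ.2.2.1 i)

theorem msupport_subset_Icc (hμ : IsStationary S μ) (j : Fin N) :
    msupport (μ j) ⊆ Icc 0 1 := by
  rw [msupport_eq_support]
  exact Measure.support_subset_of_isClosed isClosed_Icc (hμ.ae_mem_Icc j)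

theorem smul_map_le (hμ : IsStationary S μ) (i j : Fin N) :
    ENNReal.ofReal (S.P i j) • (μ i).map (S.f i) ≤ μ j := by
  rw [hμ.eq_transfer j]
  exact Finset.single_le_sum (f := fun i => ENNReal.ofReal (S.P i j) • (μ i).map (S.f i))
    (fun _ _ => Measure.zero_le _) (Finset.mem_univ i)

theorem mapsTo_msupport (hμ : IsStationary S μ) {i j : Fin N} (hij : Adm S i j) :
    MapsTo (S.f i) (msupport (μ i)) (msupport (μ j)) := by
  intro x hx
  have hxI := hμ.msupport_subset_Icc i hx
  rw [msupport_eq_support, Measure.mem_support_iff_forall] at hx ⊢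
  intro U hU
  obtain ⟨V, hV, hVU⟩ := mem_nhdsWithin_iff_exists_mem_nhds_inter.1
    (((S.f_contDiff i).continuousOn x hxI).preimage_mem_nhdsWithin hU)
  refine lt_of_lt_of_le ?_ (Measure.le_iff'.1 (hμ.smul_map_le i j) U)
  rw [Measure.smul_apply, smul_eq_mul]
  refine ENNReal.mul_pos (ofReal_P_ne_zero hij) ((hx V hV).trans_le ?_).ne'
  calc μ i V = μ i (V ∩ Icc 0 1) := (measure_inter_conull (hμ.2.2.1 i)).symm
    _ ≤ μ i (S.f i ⁻¹' U) := measure_mono hVU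
    _ ≤ (μ i).map (S.f i) U := Measure.le_map_apply (S.f_meas i).aemeasurable U

theorem preimage_ae_eq_of_ae_le (hμ : IsStationary S μ) {L : Fin N → Set ℝ}
    (hL : ∀ j, MeasurableSet (L j))
    (hsub : ∀ i j, Adm S i j → S.f i ⁻¹' L j ≤ᵐ[μ i] L i)
    {i j : Fin N} (hij : Adm S i j) : S.f i ⁻¹' L j =ᵐ[μ i] L i := by
  have hfinite : ∀ i, IsFiniteMeasure (μ i) := hμ.1
  have hle : ∀ i j, ENNReal.ofReal (S.P i j) * μ i (S.f i ⁻¹' L j)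
      ≤ ENNReal.ofReal (S.P i j) * μ i (L i) := fun i j => by
    by_cases hij : Adm S i j
    · exact mul_le_mul_right (measure_mono_ae (hsub i j hij)) _
    · simp [ofReal_P_eq_zero hij]
  have hrow : ∀ i, ∑ j, ENNReal.ofReal (S.P i j) * μ i (L i) = μ i (L i) := fun i => by
    rw [← Finset.sum_mul, sum_ofReal_P, one_mul]
  -- the double sum is `∑ j, μ j (L j)` by stationarity, so no term of `hle` can be strict
  have hsum :
      ∑ i, ∑ j, ENNReal.ofReal (S.P i j) * μ i (S.f i ⁻¹' L j) = ∑ i, μ i (L i) := by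
    rw [Finset.sum_comm]
    exact Finset.sum_congr rfl fun j _ =>
      ((hμ.eq_transfer j).symm ▸ transfer_apply μ j (hL j)).symm
  have hfin : ∑ i, μ i (L i) ≠ ∞ := ENNReal.sum_ne_top.2 fun i _ => measure_ne_top _ _
  have hrows := (ENNReal.sum_eq_sum_iff_of_le
    (fun i _ => (Finset.sum_le_sum fun j _ => hle i j).trans_eq (hrow i)) hfin).1 hsum
  have hterm := (ENNReal.sum_eq_sum_iff_of_le (fun j _ => hle i j)
    ((hrow i).symm ▸ measure_ne_top _ _)).1 ((hrows i (Finset.mem_univ i)).trans (hrow i).symm)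
    j (Finset.mem_univ j)
  refine ae_eq_of_ae_subset_of_measure_ge (hsub i j hij) ?_
    ((S.f_meas i) (hL j)).nullMeasurableSet (measure_ne_top _ _)
  exact ((ENNReal.mul_right_inj (ofReal_P_ne_zero hij) ENNReal.ofReal_ne_top).1 hterm).ge

theorem restrict_eq_transfer (hμ : IsStationary S μ) {L : Fin N → Set ℝ}
    (hL : ∀ j, MeasurableSet (L j)) (heq : ∀ i j, Adm S i j → S.f i ⁻¹' L j =ᵐ[μ i] L i)
    (j : Fin N) : (μ j).restrict (L j) = transfer S (fun i => (μ i).restrict (L i)) j := by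
  ext E hE
  rw [Measure.restrict_apply hE, hμ.eq_transfer j, transfer_apply μ j (hE.inter (hL j)),
    transfer_apply _ j hE]
  refine Finset.sum_congr rfl fun i _ => ?_
  by_cases hij : Adm S i j
  · rw [Measure.restrict_apply ((S.f_meas i) hE), preimage_inter]
    exact congrArg _ (measure_congr ((ae_eq_refl _).inter (heq i j hij)))
  · simp [ofReal_P_eq_zero hij]

theorem isStationary_inv_smul_restrict (hμ : IsStationary S μ) {L : Fin N → Set ℝ}
    (hfix : ∀ j, (μ j).restrict (L j) = transfer S (fun i => (μ i).restrict (L i)) j)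
    (h₀ : ∑ j, μ j (L j) ≠ 0) (h_top : ∑ j, μ j (L j) ≠ ∞) :
    IsStationary S fun j => (∑ i, μ i (L i))⁻¹ • (μ j).restrict (L j) :=
  isStationary_inv_smul hfix
    (fun j => nonpos_iff_eq_zero.1 ((Measure.le_iff'.1 Measure.restrict_le_self _).trans_eq
      (hμ.2.2.1 j))) (by simp) h₀ h_top

end IsStationary

theorem IsErgodicStationary.forall_measure_eq_zero_or_forall_compl {μ : Fin N → Measure ℝ}
    (hμ : IsErgodicStationary S μ) {L : Fin N → Set ℝ} (hL : ∀ j, MeasurableSet (L j))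
    (hinv : ∀ i j, Adm S i j → ∀ x ∈ Icc (0:ℝ) 1, S.f i x ∈ L j → x ∈ L i) :
    (∀ j, μ j (L j) = 0) ∨ ∀ j, μ j (L j)ᶜ = 0 := by
  obtain ⟨hst, hext⟩ := hμ
  have hfinite : ∀ i, IsFiniteMeasure (μ i) := hst.1
  have hae : ∀ i j, Adm S i j → S.f i ⁻¹' L j =ᵐ[μ i] L i := fun i j hij =>
    hst.preimage_ae_eq_of_ae_le hL
      (fun i j hij => (hst.ae_mem_Icc i).mono fun x hx => hinv i j hij x hx) hij
  set R := ∑ j, μ j (L j)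
  set R' := ∑ j, μ j (L j)ᶜ
  have hRR' : R + R' = 1 := by
    rw [← Finset.sum_add_distrib, ← hst.2.1]
    exact Finset.sum_congr rfl fun j _ => measure_add_measure_compl (hL j)
  have hR_top : R ≠ ∞ := ne_top_of_le_ne_top ENNReal.one_ne_top (hRR' ▸ le_self_add)
  have hR'_top : R' ≠ ∞ := ne_top_of_le_ne_top ENNReal.one_ne_top (hRR' ▸ le_add_self)
  by_contra! h
  obtain ⟨⟨j, hj⟩, ⟨j', hj'⟩⟩ := h
  have hR₀ : R ≠ 0 := fun h0 => hj (Finset.sum_eq_zero_iff.1 h0 j (Finset.mem_univ j))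
  have hR'₀ : R' ≠ 0 := fun h0 => hj' (Finset.sum_eq_zero_iff.1 h0 j' (Finset.mem_univ j'))
  have hdecomp : ∀ j,
      μ j = R • R⁻¹ • (μ j).restrict (L j) + (1 - R) • R'⁻¹ • (μ j).restrict (L j)ᶜ := by
    intro j
    rw [ENNReal.sub_eq_of_eq_add_rev hR_top hRR'.symm, smul_smul, smul_smul,
      ENNReal.mul_inv_cancel hR₀ hR_top, ENNReal.mul_inv_cancel hR'₀ hR'_top, one_smul,
      one_smul, Measure.restrict_add_restrict_compl (hL j)]
  have heq := hext _ _
    (hst.isStationary_inv_smul_restrict (hst.restrict_eq_transfer hL hae) hR₀ hR_top)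
    (hst.isStationary_inv_smul_restrict
      (hst.restrict_eq_transfer (fun j => (hL j).compl) fun i j hij => (hae i j hij).compl)
      hR'₀ hR'_top)
    R (pos_iff_ne_zero.2 hR₀) (hRR' ▸ ENNReal.lt_add_right hR_top hR'₀) hdecomp
  have := congrArg (fun ν => ν j (L j)) heq
  simp [Measure.restrict_apply (hL j), hj] at this

/-- `AdmComp S k j g`: `g = f_{w_n} ∘ ⋯ ∘ f_{w_1}` for an admissible word `k = w_1, …, w_n`
with `(w_n, j)` admissible, so that `g` maps `I_k` to `I_j`. -/
inductive AdmComp (S : Sys N) (k : Fin N) : Fin N → (ℝ → ℝ) → Prop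
  | base {j : Fin N} (h : Adm S k j) : AdmComp S k j (S.f k)
  | step {i j : Fin N} {g : ℝ → ℝ} (hg : AdmComp S k i g) (h : Adm S i j) :
      AdmComp S k j (S.f i ∘ g)

namespace AdmComp

theorem exists_of_pow_pos (m : ℕ) {i j : Fin N}
    (h : 0 < ((Matrix.of fun i j => if S.A i j then (1 : ℕ) else 0) ^ (m + 1)) i j) :
    ∃ g, AdmComp S i j g := by
  induction m generalizing j with
  | zero =>
    rw [zero_add, pow_one] at h
    exact ⟨_, base (by simpa [Adm, Nat.pos_iff_ne_zero] using h)⟩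
  | succ m ih =>
    rw [pow_succ, Matrix.mul_apply] at h
    obtain ⟨l, -, hl⟩ := Finset.sum_pos_iff.1 h
    obtain ⟨g, hg⟩ := ih (pos_of_mul_pos_left hl (Nat.zero_le _))
    exact ⟨_, step hg (by
      simpa [Adm, Nat.pos_iff_ne_zero] using pos_of_mul_pos_right hl (Nat.zero_le _))⟩

theorem exists_of_transitive (S : Sys N) (i j : Fin N) : ∃ g, AdmComp S i j g := by
  obtain ⟨n, hn, hpos⟩ := S.transitive
  obtain ⟨m, rfl⟩ := Nat.exists_eq_succ_of_ne_zero hn.ne'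
  exact exists_of_pow_pos m (hpos i j)

variable {k j : Fin N} {g : ℝ → ℝ}

theorem exists_word (hg : AdmComp S k j g) :
    ∃ l : List (Fin N), 2 ≤ l.length ∧ l.IsChain (Adm S) ∧ l.head? = some k ∧
      l.getLast? = some j ∧ transMap S l = g := by
  induction hg with
  | @base j h => exact ⟨[k, j], le_rfl, List.isChain_pair.2 h, rfl, rfl, rfl⟩
  | @step i j g _ h ih =>
    obtain ⟨l, hlen, hchain, hhead, hlast, rfl⟩ := ih
    have hne : l ≠ [] := List.ne_nil_of_length_pos (by omega)
    refine ⟨l ++ [j], by simp; omega, ?_, by simp [List.head?_append_of_ne_nil _ hne, hhead],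
      by simp, ?_⟩
    · exact List.isChain_append.2 ⟨hchain, List.isChain_singleton j,
        fun x hx y hy => by simp_all⟩
    · funext x
      simp only [transMap, wordMap, List.dropLast_concat, Function.comp_apply]
      conv_lhs => rw [← List.dropLast_append_getLast? i hlast]
      rw [List.foldl_append]
      rfl

theorem mapsTo_Icc (hg : AdmComp S k j g) : MapsTo g (Icc 0 1) (Icc 0 1) := by
  induction hg with
  | base => exact (S.f_into k).mono_right Ioo_subset_Icc_self
  | @step i j g _ _ ih => exact ((S.f_into i).mono_right Ioo_subset_Icc_self).comp ih

theorem monotoneOn (hg : AdmComp S k j g) : MonotoneOn g (Icc 0 1) := by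
  induction hg with
  | base => exact (S.f_mono k).monotoneOn
  | @step i j g hg _ ih => exact (S.f_mono i).monotoneOn.comp ih hg.mapsTo_Icc

theorem mapsTo_msupport {μ : Fin N → Measure ℝ} (hμ : IsStationary S μ)
    (hg : AdmComp S k j g) : MapsTo g (msupport (μ k)) (msupport (μ j)) := by
  induction hg with
  | base h => exact hμ.mapsTo_msupport h
  | step _ h ih => exact (hμ.mapsTo_msupport h).comp ih

end AdmComp

namespace IsStationary

variable {μ : Fin N → Measure ℝ}

theorem msupport_nonempty (hμ : IsStationary S μ) (j : Fin N) : (msupport (μ j)).Nonempty := by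
  obtain ⟨i, -, hi⟩ : ∃ i ∈ Finset.univ, μ i univ ≠ 0 :=
    Finset.exists_ne_zero_of_sum_ne_zero (hμ.2.1 ▸ one_ne_zero)
  obtain ⟨x, hx⟩ : (msupport (μ i)).Nonempty := by
    rw [msupport_eq_support]
    exact Measure.nonempty_support (Measure.measure_univ_ne_zero.1 hi)
  obtain ⟨g, hg⟩ := AdmComp.exists_of_transitive S i j
  exact ⟨g x, hg.mapsTo_msupport hμ hx⟩

theorem isCompact_msupport (hμ : IsStationary S μ) (j : Fin N) : IsCompact (msupport (μ j)) :=
  isCompact_Icc.of_isClosed_subset (msupport_eq_support _ ▸ Measure.isClosed_support)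
    (hμ.msupport_subset_Icc j)

theorem Alow_mem (hμ : IsStationary S μ) (j : Fin N) : Alow (μ j) ∈ msupport (μ j) :=
  (hμ.isCompact_msupport j).sInf_mem (hμ.msupport_nonempty j)

theorem Bhigh_mem (hμ : IsStationary S μ) (j : Fin N) : Bhigh (μ j) ∈ msupport (μ j) :=
  (hμ.isCompact_msupport j).sSup_mem (hμ.msupport_nonempty j)

theorem Alow_le (hμ : IsStationary S μ) {j : Fin N} {x : ℝ} (hx : x ∈ msupport (μ j)) :
    Alow (μ j) ≤ x :=
  csInf_le (hμ.isCompact_msupport j).bddBelow hx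

theorem le_Bhigh (hμ : IsStationary S μ) {j : Fin N} {x : ℝ} (hx : x ∈ msupport (μ j)) :
    x ≤ Bhigh (μ j) :=
  le_csSup (hμ.isCompact_msupport j).bddAbove hx

theorem Icc_Alow_Bhigh_subset (hμ : IsStationary S μ) (j : Fin N) :
    Icc (Alow (μ j)) (Bhigh (μ j)) ⊆ Icc 0 1 :=
  Icc_subset_Icc (hμ.msupport_subset_Icc j (hμ.Alow_mem j)).1
    (hμ.msupport_subset_Icc j (hμ.Bhigh_mem j)).2

theorem Alow_mem_Icc (hμ : IsStationary S μ) (j : Fin N) :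
    Alow (μ j) ∈ Icc (Alow (μ j)) (Bhigh (μ j)) :=
  ⟨le_rfl, hμ.Alow_le (hμ.Bhigh_mem j)⟩

theorem Bhigh_mem_Icc (hμ : IsStationary S μ) (j : Fin N) :
    Bhigh (μ j) ∈ Icc (Alow (μ j)) (Bhigh (μ j)) :=
  ⟨hμ.Alow_le (hμ.Bhigh_mem j), le_rfl⟩

end IsStationary

theorem AdmComp.mapsTo_Icc_Alow_Bhigh {μ : Fin N → Measure ℝ} (hμ : IsStationary S μ)
    {k j : Fin N} {g : ℝ → ℝ} (hg : AdmComp S k j g) :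
    MapsTo g (Icc (Alow (μ k)) (Bhigh (μ k))) (Icc (Alow (μ j)) (Bhigh (μ j))) := fun _ hx =>
  ⟨(hμ.Alow_le (hg.mapsTo_msupport hμ (hμ.Alow_mem k))).trans
      (hg.monotoneOn (hμ.Icc_Alow_Bhigh_subset k (hμ.Alow_mem_Icc k))
        (hμ.Icc_Alow_Bhigh_subset k hx) hx.1),
    (hg.monotoneOn (hμ.Icc_Alow_Bhigh_subset k hx)
        (hμ.Icc_Alow_Bhigh_subset k (hμ.Bhigh_mem_Icc k)) hx.2).trans
      (hμ.le_Bhigh (hg.mapsTo_msupport hμ (hμ.Bhigh_mem k)))⟩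

def admValues (S : Sys N) (k j : Fin N) (x : ℝ) : Set ℝ :=
  {y | ∃ g, AdmComp S k j g ∧ g x = y}

theorem admValues_nonempty (S : Sys N) (k j : Fin N) (x : ℝ) : (admValues S k j x).Nonempty :=
  let ⟨g, hg⟩ := AdmComp.exists_of_transitive S k j
  ⟨g x, g, hg, rfl⟩

theorem mapsTo_admValues {k i j : Fin N} (hij : Adm S i j) (x : ℝ) :
    MapsTo (S.f i) (admValues S k i x) (admValues S k j x) := by
  rintro _ ⟨g, hg, rfl⟩
  exact ⟨S.f i ∘ g, hg.step hij, rfl⟩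

theorem IsStationary.admValues_subset {μ : Fin N → Measure ℝ} (hμ : IsStationary S μ)
    {k : Fin N} {x : ℝ} (hx : x ∈ Icc (Alow (μ k)) (Bhigh (μ k))) (j : Fin N) :
    admValues S k j x ⊆ Icc (Alow (μ j)) (Bhigh (μ j)) := by
  rintro _ ⟨g, hg, rfl⟩
  exact hg.mapsTo_Icc_Alow_Bhigh hμ hx

namespace IsErgodicStationary

variable {μ : Fin N → Measure ℝ}

theorem sInf_admValues_le_Alow (hgen : IsGeneric S) (hμ : IsErgodicStationary S μ)
    (k k' : Fin N) : sInf (admValues S k k' (Bhigh (μ k))) ≤ Alow (μ k') := by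
  have hst := hμ.1
  set c : Fin N → ℝ := fun j => sInf (admValues S k j (Bhigh (μ k)))
  have hsub := hst.admValues_subset (hst.Bhigh_mem_Icc k)
  have hc : ∀ j, c j ∈ Icc (Alow (μ j)) (Bhigh (μ j)) := fun j =>
    isClosed_Icc.closure_subset_iff.2 (hsub j)
      (csInf_mem_closure (admValues_nonempty S k j _) (bddBelow_Icc.mono (hsub j)))
  have hcI : ∀ j, c j ∈ Icc (0:ℝ) 1 := fun j => hst.Icc_Alow_Bhigh_subset j (hc j)
  have hstep : ∀ i j, Adm S i j → c j ≤ S.f i (c i) := fun i j hij =>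
    csInf_le_map_csInf_of_mapsTo (admValues_nonempty S k i _) (bddBelow_Icc.mono (hsub i))
      (bddBelow_Icc.mono (hsub j))
      (((S.f_contDiff i).continuousOn.continuousWithinAt (hcI i)).mono
        ((hsub i).trans (hst.Icc_Alow_Bhigh_subset i)))
      (mapsTo_admValues hij _)
  by_contra! hlt
  rcases hμ.forall_measure_eq_zero_or_forall_compl (L := fun j => Iio (c j))
    (fun _ => measurableSet_Iio) (fun i j hij x hx hfx =>
      ((S.f_mono i).lt_iff_lt hx (hcI i)).1 (lt_of_lt_of_le hfx (hstep i j hij))) with h | h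
  · exact (measure_Iio_pos_of_mem_msupport (hst.Alow_mem k') hlt).ne' (h k')
  · have hcB : ∀ j, c j = Bhigh (μ j) := fun j => (hc j).2.antisymm <| not_lt.1 fun hlt =>
      (measure_Ioi_pos_of_mem_msupport (hst.Bhigh_mem j) hlt).ne'
        (measure_mono_null Ioi_subset_Ici_self (by simpa using h j))
    refine hgen.2.2 ⟨fun j => Bhigh (μ j), fun j => hst.msupport_subset_Icc j (hst.Bhigh_mem j),
      fun i j hij => ?_⟩
    exact (hst.le_Bhigh (hst.mapsTo_msupport hij (hst.Bhigh_mem i))).antisymm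
      (hcB i ▸ hcB j ▸ hstep i j hij)

theorem Bhigh_le_sSup_admValues (hgen : IsGeneric S) (hμ : IsErgodicStationary S μ)
    (k k' : Fin N) : Bhigh (μ k') ≤ sSup (admValues S k k' (Alow (μ k))) := by
  have hst := hμ.1
  set d : Fin N → ℝ := fun j => sSup (admValues S k j (Alow (μ k)))
  have hsub := hst.admValues_subset (hst.Alow_mem_Icc k)
  have hd : ∀ j, d j ∈ Icc (Alow (μ j)) (Bhigh (μ j)) := fun j =>
    isClosed_Icc.closure_subset_iff.2 (hsub j)
      (csSup_mem_closure (admValues_nonempty S k j _) (bddAbove_Icc.mono (hsub j)))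
  have hdI : ∀ j, d j ∈ Icc (0:ℝ) 1 := fun j => hst.Icc_Alow_Bhigh_subset j (hd j)
  have hstep : ∀ i j, Adm S i j → S.f i (d i) ≤ d j := fun i j hij =>
    map_csSup_le_csSup_of_mapsTo (admValues_nonempty S k i _) (bddAbove_Icc.mono (hsub i))
      (bddAbove_Icc.mono (hsub j))
      (((S.f_contDiff i).continuousOn.continuousWithinAt (hdI i)).mono
        ((hsub i).trans (hst.Icc_Alow_Bhigh_subset i)))
      (mapsTo_admValues hij _)
  by_contra! hlt
  rcases hμ.forall_measure_eq_zero_or_forall_compl (L := fun j => Ioi (d j))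
    (fun _ => measurableSet_Ioi) (fun i j hij x hx hfx =>
      ((S.f_mono i).lt_iff_lt (hdI i) hx).1 (lt_of_le_of_lt (hstep i j hij) hfx)) with h | h
  · exact (measure_Ioi_pos_of_mem_msupport (hst.Bhigh_mem k') hlt).ne' (h k')
  · have hdA : ∀ j, d j = Alow (μ j) := fun j => ((hd j).1.antisymm <| not_lt.1 fun hlt =>
      (measure_Iio_pos_of_mem_msupport (hst.Alow_mem j) hlt).ne'
        (measure_mono_null Iio_subset_Iic_self (by simpa using h j))).symm
    refine hgen.2.2 ⟨fun j => Alow (μ j), fun j => hst.msupport_subset_Icc j (hst.Alow_mem j),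
      fun i j hij => ?_⟩
    exact (hdA i ▸ hdA j ▸ hstep i j hij).antisymm
      (hst.Alow_le (hst.mapsTo_msupport hij (hst.Alow_mem i)))

end IsErgodicStationary

/-- admissible compositions squeezing `I_{μ,k}` into arbitrarily small
neighborhoods of `A_{μ,k'}` and `B_{μ,k'}`. -/
theorem statement13 {N : ℕ} (S : Sys N) (hgen : IsGeneric S)
    (μ : Fin N → Measure ℝ) (hμ : IsErgodicStationary S μ)
    (k k' : Fin N) (ε : ℝ) (hε : 0 < ε) :
    ∃ lA lB : List (Fin N),
      (2 ≤ lA.length ∧ lA.Chain' (Adm S) ∧ lA.head? = some k ∧ lA.getLast? = some k' ∧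
        ∀ x ∈ Icc (Alow (μ k)) (Bhigh (μ k)), |transMap S lA x - Alow (μ k')| < ε) ∧
      (2 ≤ lB.length ∧ lB.Chain' (Adm S) ∧ lB.head? = some k ∧ lB.getLast? = some k' ∧
        ∀ x ∈ Icc (Alow (μ k)) (Bhigh (μ k)), |transMap S lB x - Bhigh (μ k')| < ε) := by
  have hst := hμ.1
  obtain ⟨_, ⟨gA, hgA, rfl⟩, hgA_lt⟩ := exists_lt_of_csInf_lt (admValues_nonempty S k k' _)
    ((hμ.sInf_admValues_le_Alow hgen k k').trans_lt (lt_add_of_pos_right _ hε))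
  obtain ⟨_, ⟨gB, hgB, rfl⟩, hgB_gt⟩ := exists_lt_of_lt_csSup (admValues_nonempty S k k' _)
    ((sub_lt_self _ hε).trans_le (hμ.Bhigh_le_sSup_admValues hgen k k'))
  obtain ⟨lA, hlenA, hchainA, hheadA, hlastA, rfl⟩ := hgA.exists_word
  obtain ⟨lB, hlenB, hchainB, hheadB, hlastB, rfl⟩ := hgB.exists_word
  refine ⟨lA, lB, ⟨hlenA, hchainA, hheadA, hlastA, fun x hx => ?_⟩,
    ⟨hlenB, hchainB, hheadB, hlastB, fun x hx => ?_⟩⟩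
  · have hx_mem := hgA.mapsTo_Icc_Alow_Bhigh hst hx
    have hx_le := hgA.monotoneOn (hst.Icc_Alow_Bhigh_subset k hx)
      (hst.Icc_Alow_Bhigh_subset k (hst.Bhigh_mem_Icc k)) hx.2
    rw [abs_lt]
    constructor <;> linarith [hx_mem.1]
  · have hx_mem := hgB.mapsTo_Icc_Alow_Bhigh hst hx
    have hx_ge := hgB.monotoneOn (hst.Icc_Alow_Bhigh_subset k (hst.Alow_mem_Icc k))
      (hst.Icc_Alow_Bhigh_subset k hx) hx.1
    rw [abs_lt]
    constructor <;> linarith [hx_mem.2]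

end PaperSSP
end

section
/- Let F be a step skew product over a transitive subshift of finite type, ν an ergodic Markov measure on Σ, and S = S_{φ_1,φ_2} a trapping strip whose maximal attractor is a continuous-bony graph with graph part the graph of a function φ defined on a full ν-measure subset of Σ. Then the lift m_φ of ν to the graph of φ (the pushforward of ν under ω ↦ (ω, φ(ω))) is an SRB measure for F; its basin contains every point (ω,x) ∈ S whose base coordinate ω is Birkhoff-generic for ν, hence contains a subset of S of full standard measure in S. -/
open MeasureTheory Set Filter Topology
open scoped ENNReal

namespace PaperSSP

variable {N : ℕ}

/-- `ω` is Birkhoff-generic for `ν`: the time averages of every continuous function along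
the `σ`-orbit of `ω` converge to the `ν`-average. -/
def BirkhoffGeneric {N : ℕ} (S : Sys N) (ν : Measure (Sig S)) (ω : Sig S) : Prop :=
  ∀ g : C(Sig S, ℝ),
    Tendsto (fun n : ℕ => (∑ i ∈ Finset.range n, g ((shift S)^[i] ω)) / n) atTop
      (𝓝 (∫ ω', g ω' ∂ν))

end PaperSSP

/-!
The graph measure `m_φ` is invariant because `F` maps the attractor into itself while the
attractor's fibers over `ω` and `σ ω` are `{φ ω}` and `{φ (σ ω)}` for a.e. `ω`.

For the basin, the fibers of `Fⁿ(T)` are intervals with continuous endpoints that shrink to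
`{φ ω}` for a.e. `ω`. Hence the fiberwise maximum `Gₙ` of a continuous `g` over `Fⁿ(T)` is a
continuous function on `Σ`, and `∫ Gₙ dν → ∫ g(ω, φ ω) dν` by dominated convergence. Along the
orbit of a point `q = (ω, x)` of `T` we have `g(Fⁱ q) ≤ Gₙ(σⁱ ω)` for `i ≥ n`, so Birkhoff
genericity of `ω` bounds the limsup of the time averages of `g` by `∫ Gₙ dν`; the
bound from below is the same argument for `-g`. Finally, a.e. `ω` is generic by Birkhoff's
ergodic theorem for bounded functions (a consequence of the maximal ergodic theorem), applied to
a countable dense set of continuous functions.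
-/

section Ergodic

open Finset

variable {α : Type*} {T : α → α} {f : α → ℝ}

noncomputable def birkhoffMax (T : α → α) (f : α → ℝ) (n : ℕ) (x : α) : ℝ :=
  (range (n + 1)).sup' nonempty_range_add_one fun k => birkhoffSum T f k x

lemma birkhoffSum_le_birkhoffMax {k n : ℕ} (hk : k ≤ n) (x : α) :
    birkhoffSum T f k x ≤ birkhoffMax T f n x :=
  le_sup' (fun k => birkhoffSum T f k x) (mem_range_succ_iff.2 hk)

lemma birkhoffMax_nonneg (n : ℕ) (x : α) : 0 ≤ birkhoffMax T f n x := by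
  simpa using birkhoffSum_le_birkhoffMax (T := T) (f := f) (Nat.zero_le n) x

lemma birkhoffMax_le_add_birkhoffMax_apply {n : ℕ} {x : α} (hx : 0 < birkhoffMax T f n x) :
    birkhoffMax T f n x ≤ f x + birkhoffMax T f n (T x) := by
  obtain ⟨k, hk, hmax⟩ := exists_mem_eq_sup' nonempty_range_add_one
    fun k => birkhoffSum T f k x
  rw [birkhoffMax, hmax] at hx ⊢
  obtain _ | j := k
  · simp at hx
  · rw [birkhoffSum_succ']
    gcongr
    exact birkhoffSum_le_birkhoffMax (by have := mem_range.1 hk; omega) _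

/-- The set where `limsup_n (birkhoffAverage ℝ T f n x) ≥ q`, written with rational tolerances
so that it is visibly measurable. -/
def birkhoffLimsupGe (T : α → α) (f : α → ℝ) (q : ℝ) : Set α :=
  {x | ∀ ε : ℚ, 0 < ε → ∃ᶠ n in atTop, q - ε < birkhoffAverage ℝ T f n x}

lemma preimage_birkhoffLimsupGe (hf : Bornology.IsBounded (range f)) (q : ℝ) :
    T ⁻¹' birkhoffLimsupGe T f q = birkhoffLimsupGe T f q := by
  have hdiff := fun x => tendsto_birkhoffAverage_apply_sub_birkhoffAverage' ℝ hf T x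
  ext x
  refine ⟨fun hx ε hε => ?_, fun hx ε hε => ?_⟩
  · have hsmall := (hdiff x).eventually (gt_mem_nhds (show (0 : ℝ) < ε / 2 by positivity))
    refine ((hx (ε / 2) (by positivity)).and_eventually hsmall).mono fun n hn => ?_
    push_cast at hn
    linarith [hn.1, hn.2]
  · have hε' : (0 : ℝ) < ε := by exact_mod_cast hε
    have hsmall := (hdiff x).eventually (lt_mem_nhds (show -((ε : ℝ) / 2) < 0 by linarith))
    refine ((hx (ε / 2) (by positivity)).and_eventually hsmall).mono fun n hn => ?_
    push_cast at hn
    show q - ε < birkhoffAverage ℝ T f n (T x)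
    linarith [hn.1, hn.2]

variable [MeasurableSpace α] {μ : Measure α}

lemma measurable_birkhoffSum (hT : Measurable T) (hf : Measurable f) (n : ℕ) :
    Measurable (birkhoffSum T f n) :=
  Finset.measurable_sum _ fun i _ => hf.comp (hT.iterate i)

lemma measurable_birkhoffMax (hT : Measurable T) (hf : Measurable f) (n : ℕ) :
    Measurable (birkhoffMax T f n) :=
  Finset.measurable_range_sup'' fun k _ => measurable_birkhoffSum hT hf k

lemma integrable_birkhoffMax (hT : MeasurePreserving T μ μ) (hf : Measurable f)
    (hfi : Integrable f μ) (n : ℕ) : Integrable (birkhoffMax T f n) μ := by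
  have hS : ∀ k, Integrable (birkhoffSum T f k) μ := fun k =>
    integrable_finsetSum _ fun i _ => (hT.iterate i).integrable_comp_of_integrable hfi
  refine (integrable_finsetSum (range (n + 1)) fun k _ => (hS k).norm).mono'
    (measurable_birkhoffMax hT.measurable hf n).aestronglyMeasurable (ae_of_all _ fun x => ?_)
  obtain ⟨k, hk, hmax⟩ := exists_mem_eq_sup' nonempty_range_add_one
    fun k => birkhoffSum T f k x
  rw [Real.norm_of_nonneg (birkhoffMax_nonneg n x), birkhoffMax, hmax]
  exact (le_abs_self _).trans (single_le_sum (f := fun k => ‖birkhoffSum T f k x‖)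
    (fun _ _ => norm_nonneg _) hk)

theorem setIntegral_birkhoffMax_pos_nonneg (hT : MeasurePreserving T μ μ) (hf : Measurable f)
    (hfi : Integrable f μ) (n : ℕ) :
    0 ≤ ∫ x in {x | 0 < birkhoffMax T f n x}, f x ∂μ := by
  set E := {x | 0 < birkhoffMax T f n x}
  have hM := integrable_birkhoffMax hT hf hfi n
  have hMT : Integrable (fun x => birkhoffMax T f n (T x)) μ :=
    hT.integrable_comp_of_integrable hM
  have hE : MeasurableSet E :=
    measurableSet_lt measurable_const (measurable_birkhoffMax hT.measurable hf n)
  -- off `E` the maximal function vanishes, so `M - M ∘ T ≤ 0` there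
  have hpt : ∀ x, birkhoffMax T f n x - birkhoffMax T f n (T x) ≤ E.indicator f x := by
    intro x
    by_cases hx : x ∈ E
    · rw [indicator_of_mem hx]
      linarith [birkhoffMax_le_add_birkhoffMax_apply hx]
    · rw [indicator_of_notMem hx, le_antisymm (not_lt.1 hx) (birkhoffMax_nonneg n x)]
      linarith [birkhoffMax_nonneg (T := T) (f := f) n (T x)]
  have hcomp : ∫ x, birkhoffMax T f n (T x) ∂μ = ∫ x, birkhoffMax T f n x ∂μ := by
    rw [← integral_map hT.aemeasurable
      (measurable_birkhoffMax hT.measurable hf n).aestronglyMeasurable, hT.map_eq]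
  calc 0 = ∫ x, (birkhoffMax T f n x - birkhoffMax T f n (T x)) ∂μ := by
        rw [integral_sub hM hMT, hcomp, sub_self]
    _ ≤ ∫ x, E.indicator f x ∂μ := integral_mono (hM.sub hMT) (hfi.indicator hE) hpt
    _ = ∫ x in E, f x ∂μ := integral_indicator hE

theorem integral_nonneg_of_ae_exists_birkhoffSum_pos (hT : MeasurePreserving T μ μ)
    (hf : Measurable f) (hfi : Integrable f μ) (h : ∀ᵐ x ∂μ, ∃ n, 0 < birkhoffSum T f n x) :
    0 ≤ ∫ x, f x ∂μ := by
  set E : ℕ → Set α := fun n => {x | 0 < birkhoffMax T f n x}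
  have hmono : Monotone E := fun m n hmn x (hx : 0 < birkhoffMax T f m x) =>
    show 0 < birkhoffMax T f n x from
      hx.trans_le <| sup'_mono _ (range_subset_range.2 (by omega)) _
  have hfull : ∀ᵐ x ∂μ, x ∈ ⋃ n, E n := h.mono fun x ⟨n, hn⟩ =>
    mem_iUnion.2 ⟨n, hn.trans_le (birkhoffSum_le_birkhoffMax le_rfl x)⟩
  have hlim := tendsto_setIntegral_of_monotone (fun n =>
    measurableSet_lt measurable_const (measurable_birkhoffMax hT.measurable hf n)) hmono
    hfi.integrableOn
  rw [Measure.restrict_eq_self_of_ae_mem hfull] at hlim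
  exact ge_of_tendsto' hlim fun n => setIntegral_birkhoffMax_pos_nonneg hT hf hfi n

lemma measurableSet_birkhoffLimsupGe (hT : Measurable T) (hf : Measurable f) (q : ℝ) :
    MeasurableSet (birkhoffLimsupGe T f q) := by
  simp only [birkhoffLimsupGe, frequently_atTop, ofPred_forall, ofPred_exists]
  exact .iInter fun _ => .iInter fun _ => .iInter fun _ => .iUnion fun n =>
    (MeasurableSet.const _).inter <| measurableSet_lt measurable_const <|
      (measurable_birkhoffSum hT hf n).const_smul ((n : ℝ)⁻¹)

lemma integrable_of_isBounded_range [IsFiniteMeasure μ] (hf : Measurable f)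
    (hb : Bornology.IsBounded (range f)) : Integrable f μ := by
  obtain ⟨C, hC⟩ := hb.exists_norm_le
  exact (integrable_const C).mono' hf.aestronglyMeasurable
    (ae_of_all _ fun x => hC _ (mem_range_self x))

variable [IsProbabilityMeasure μ]

lemma measure_birkhoffLimsupGe_eq_zero (hT : Ergodic T μ) (hf : Measurable f)
    (hb : Bornology.IsBounded (range f)) {q : ℝ} (hq : ∫ x, f x ∂μ < q) :
    μ (birkhoffLimsupGe T f q) = 0 := by
  have hB := measurableSet_birkhoffLimsupGe hT.measurable hf q
  refine (hT.prob_eq_zero_or_one hB (preimage_birkhoffLimsupGe hb q)).resolve_right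
    fun hfull => ?_
  obtain ⟨ε, hε', hεq⟩ := exists_rat_btwn (sub_pos.2 hq)
  have hε : 0 < ε := by exact_mod_cast hε'
  have hpos : ∀ᵐ x ∂μ, ∃ n, 0 < birkhoffSum T (fun y => f y - (q - ε)) n x := by
    have hae : ∀ᵐ x ∂μ, x ∈ birkhoffLimsupGe T f q :=
      mem_ae_iff.2 ((prob_compl_eq_zero_iff hB).2 hfull)
    refine hae.mono fun x hx => ?_
    obtain ⟨n, hn, hn0⟩ := ((hx ε hε).and_eventually (eventually_gt_atTop 0)).exists
    refine ⟨n, ?_⟩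
    rw [birkhoffAverage, smul_eq_mul, lt_inv_mul_iff₀ (by exact_mod_cast hn0)] at hn
    rw [birkhoffSum] at hn ⊢
    rw [sum_sub_distrib, sum_const, card_range, nsmul_eq_mul]
    linarith
  have hfi := integrable_of_isBounded_range (μ := μ) hf hb
  have := integral_nonneg_of_ae_exists_birkhoffSum_pos (f := fun y => f y - (q - ε))
    hT.toMeasurePreserving
    (hf.sub measurable_const) (hfi.sub (integrable_const _)) hpos
  rw [integral_sub hfi (integrable_const _)] at this
  simp only [integral_const, probReal_univ, smul_eq_mul, one_mul] at this
  linarith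

lemma ae_forall_rat_eventually_birkhoffAverage_lt (hT : Ergodic T μ) (hf : Measurable f)
    (hb : Bornology.IsBounded (range f)) :
    ∀ᵐ x ∂μ, ∀ q : ℚ, ∫ x, f x ∂μ < q → ∀ᶠ n in atTop, birkhoffAverage ℝ T f n x < q := by
  refine ae_all_iff.2 fun q => ?_
  by_cases hq : ∫ x, f x ∂μ < q
  · refine (measure_eq_zero_iff_ae_notMem.1
      (measure_birkhoffLimsupGe_eq_zero hT hf hb hq)).mono fun x hx _ => ?_
    simp only [birkhoffLimsupGe, mem_ofPred_eq, not_forall, not_frequently, not_lt] at hx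
    obtain ⟨ε, hε, hev⟩ := hx
    have hε' : (0 : ℝ) < ε := by exact_mod_cast hε
    exact hev.mono fun n hn => by linarith
  · exact ae_of_all _ fun x h => absurd h hq

theorem ae_tendsto_birkhoffAverage (hT : Ergodic T μ) (hf : Measurable f)
    (hb : Bornology.IsBounded (range f)) :
    ∀ᵐ x ∂μ, Tendsto (birkhoffAverage ℝ T f · x) atTop (𝓝 (∫ x, f x ∂μ)) := by
  have hbneg : Bornology.IsBounded (range (-f)) := hb.neg.subset (by rintro _ ⟨x, rfl⟩; simp)
  filter_upwards [ae_forall_rat_eventually_birkhoffAverage_lt hT hf hb,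
    ae_forall_rat_eventually_birkhoffAverage_lt hT hf.neg hbneg] with x hup hlo
  refine tendsto_order.2 ⟨fun a ha => ?_, fun b hb => ?_⟩
  · obtain ⟨q, hq1, hq2⟩ := exists_rat_btwn (neg_lt_neg ha)
    refine (hlo q (by simpa only [Pi.neg_apply, integral_neg] using hq1)).mono fun n hn => ?_
    simp only [birkhoffAverage_neg, Pi.neg_apply] at hn
    linarith
  · obtain ⟨q, hq1, hq2⟩ := exists_rat_btwn hb
    exact (hup q hq1).mono fun n hn => hn.trans hq2

end Ergodic

lemma dist_birkhoffAverage_le_of_forall_dist_le {α : Type*} (T : α → α) {g h : α → ℝ} {C : ℝ}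
    (hC : ∀ y, dist (g y) (h y) ≤ C) (n : ℕ) (x : α) :
    dist (birkhoffAverage ℝ T g n x) (birkhoffAverage ℝ T h n x) ≤ C := by
  rcases n.eq_zero_or_pos with rfl | hn
  · simpa using dist_nonneg.trans (hC x)
  have hn' : (0 : ℝ) < n := by exact_mod_cast hn
  simp only [birkhoffAverage, birkhoffSum, smul_eq_mul, Real.dist_eq, ← mul_sub,
    ← Finset.sum_sub_distrib, abs_mul, abs_inv, Nat.abs_cast, inv_mul_le_iff₀ hn']
  calc |∑ i ∈ Finset.range n, (g (T^[i] x) - h (T^[i] x))|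
      ≤ ∑ i ∈ Finset.range n, |g (T^[i] x) - h (T^[i] x)| := Finset.abs_sum_le_sum_abs _ _
    _ ≤ ∑ _i ∈ Finset.range n, C :=
        Finset.sum_le_sum fun i _ => by simpa [Real.dist_eq] using hC (T^[i] x)
    _ = n * C := by simp

section CompactSpace

variable {X : Type*} [TopologicalSpace X] [CompactSpace X] [MeasurableSpace X]
  [OpensMeasurableSpace X] {μ : Measure X} [IsProbabilityMeasure μ]

lemma dist_integral_le_dist (g h : C(X, ℝ)) : dist (∫ x, g x ∂μ) (∫ x, h x ∂μ) ≤ dist g h := by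
  have key := (BoundedContinuousFunction.mkOfCompact (g - h)).norm_integral_le_norm (μ := μ)
  have hg : Integrable g μ := (BoundedContinuousFunction.mkOfCompact g).integrable μ
  have hh : Integrable h μ := (BoundedContinuousFunction.mkOfCompact h).integrable μ
  rw [BoundedContinuousFunction.norm_mkOfCompact] at key
  rw [dist_eq_norm, dist_eq_norm, ← integral_sub hg hh]
  simpa using key

/-- Birkhoff's theorem for a countable dense family of continuous functions extends to all of
them, since the Birkhoff averages at a fixed point are `1`-Lipschitz in `g`. -/
theorem ae_forall_tendsto_birkhoffAverage [TopologicalSpace.SeparableSpace C(X, ℝ)]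
    {T : X → X} (hT : Ergodic T μ) :
    ∀ᵐ x ∂μ, ∀ g : C(X, ℝ), Tendsto (birkhoffAverage ℝ T g · x) atTop (𝓝 (∫ y, g y ∂μ)) := by
  obtain ⟨D, hD⟩ := TopologicalSpace.exists_dense_seq C(X, ℝ)
  have hae := ae_all_iff.2 fun k => ae_tendsto_birkhoffAverage hT (D k).continuous.measurable
    (isCompact_range (D k).continuous).isBounded
  filter_upwards [hae] with x hx g
  have hequi : Equicontinuous fun n (g : C(X, ℝ)) => birkhoffAverage ℝ T g n x :=
    (LipschitzWith.uniformEquicontinuous _ 1 fun n => LipschitzWith.mk_one fun g h =>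
      dist_birkhoffAverage_le_of_forall_dist_le T
        (fun y => ContinuousMap.dist_apply_le_dist (f := g) (g := h) y) n x).equicontinuous
  have hint : Continuous fun g : C(X, ℝ) => ∫ y, g y ∂μ :=
    (LipschitzWith.mk_one dist_integral_le_dist).continuous
  have hclosed := hequi.isClosed_setOfPred_tendsto (l := atTop) hint
  exact hclosed.closure_subset_iff.2 (range_subset_iff.2 hx) (hD.closure_range ▸ mem_univ g)

end CompactSpace

lemma eventually_cesaro_lt_of_le {u v : ℕ → ℝ} {n₀ : ℕ} (huv : ∀ i, n₀ ≤ i → u i ≤ v i)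
    {c L : ℝ} (hv : Tendsto (fun N : ℕ => (∑ i ∈ Finset.range N, v i) / N) atTop (𝓝 c))
    (hc : c < L) : ∀ᶠ N : ℕ in atTop, (∑ i ∈ Finset.range N, u i) / N < L := by
  obtain ⟨C, hsum⟩ : ∃ C, ∀ N, n₀ ≤ N →
      ∑ i ∈ Finset.range N, u i ≤ ∑ i ∈ Finset.range N, v i + C := by
    refine ⟨∑ i ∈ Finset.range n₀, (u i - v i), fun N hN => ?_⟩
    have htail : ∑ i ∈ Finset.Ico n₀ N, (u i - v i) ≤ 0 :=
      Finset.sum_nonpos fun i hi => sub_nonpos.2 (huv i (Finset.mem_Ico.1 hi).1)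
    have hsplit := Finset.sum_range_add_sum_Ico (fun i => u i - v i) hN
    have hdiff := Finset.sum_sub_distrib (s := Finset.range N) (f := u) (g := v)
    linarith
  have hlim : Tendsto (fun N : ℕ => (∑ i ∈ Finset.range N, v i) / N + C / N) atTop (𝓝 c) := by
    simpa using hv.add (tendsto_const_div_atTop_nhds_zero_nat C)
  filter_upwards [hlim.eventually (gt_mem_nhds hc), eventually_ge_atTop (max n₀ 1)]
    with N hlt hN
  have hN0 : (0 : ℝ) < N := by exact_mod_cast (le_max_right n₀ 1).trans hN
  calc (∑ i ∈ Finset.range N, u i) / N ≤ (∑ i ∈ Finset.range N, v i + C) / N :=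
        div_le_div_of_nonneg_right (hsum N ((le_max_left n₀ 1).trans hN)) hN0.le
    _ = (∑ i ∈ Finset.range N, v i) / N + C / N := add_div _ _ _
    _ < L := hlt
lemma tendsto_sSup_image_of_iInter_eq_singleton {X : Type*} [TopologicalSpace X] [T2Space X]
    {K : ℕ → Set X} (hK : Antitone K) (hKc : ∀ n, IsCompact (K n)) {p : X}
    (hp : ⋂ n, K n = {p}) {h : X → ℝ} (hh : Continuous h) :
    Tendsto (fun n => sSup (h '' K n)) atTop (𝓝 (h p)) := by
  have hpK : ∀ n, p ∈ K n := mem_iInter.1 (hp ▸ mem_singleton p)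
  refine tendsto_order.2 ⟨fun a ha => Eventually.of_forall fun n =>
    ha.trans_le (le_csSup ((hKc n).image hh).bddAbove (mem_image_of_mem h (hpK n))),
    fun b hb => ?_⟩
  obtain ⟨i, hi⟩ := exists_subset_nhds_of_isCompact' hK.directed_ge hKc
    (fun n => (hKc n).isClosed) (U := h ⁻¹' Iio b) fun x hx => by
      rw [hp, mem_singleton_iff] at hx
      exact (isOpen_Iio.preimage hh).mem_nhds (hx ▸ hb)
  filter_upwards [eventually_ge_atTop i] with n hn
  obtain ⟨x, hx, hxs⟩ := ((hKc n).image hh).sSup_mem ((Set.nonempty_of_mem (hpK n)).image h)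
  rw [← hxs]
  exact hi (hK hn hx)

lemma continuous_sSup_image_Icc {X : Type*} [TopologicalSpace X] {g : X × ℝ → ℝ}
    (hg : Continuous g) {u v : X → ℝ} (hu : Continuous u) (hv : Continuous v)
    (huv : ∀ x, u x ≤ v x) :
    Continuous fun x => sSup ((fun t => g (x, t)) '' Icc (u x) (v x)) := by
  have hIcc : ∀ x, Icc (u x) (v x) = AffineMap.lineMap (u x) (v x) '' Icc (0 : ℝ) 1 :=
    fun x => by rw [← segment_eq_image_lineMap, segment_eq_Icc (huv x)]
  simp_rw [hIcc, image_image]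
  exact isCompact_Icc.continuous_sSup (hg.comp (continuous_fst.prodMk
    (AffineMap.lineMap_continuous_uncurry.comp ((hu.comp continuous_fst).prodMk
      ((hv.comp continuous_fst).prodMk continuous_snd)))))

lemma antitone_iterate_image {α : Type*} {f : α → α} {s : Set α} (h : MapsTo f s s) :
    Antitone fun n => f^[n] '' s :=
  antitone_nat_of_succ_le fun n => by
    rw [Function.iterate_succ, image_comp]
    exact image_mono h.image_subset

lemma mapsTo_iInter_iterate_image {α : Type*} {f : α → α} {s : Set α} (h : MapsTo f s s) :
    MapsTo f (⋂ n, f^[n] '' s) (⋂ n, f^[n] '' s) := fun x hx => mem_iInter.2 fun n => by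
  have : f x ∈ f^[n + 1] '' s := by
    rw [Function.iterate_succ', image_comp]
    exact mem_image_of_mem f (mem_iInter.1 hx n)
  exact antitone_iterate_image h n.le_succ this

namespace PaperSSP

variable {N : ℕ} {S : Sys N}

lemma isClosed_admissible (S : Sys N) :
    IsClosed {ω : ℤ → Fin N | ∀ n, S.A (ω n) (ω (n + 1)) = true} := by
  simp only [ofPred_forall]
  exact isClosed_iInter fun n => (isClosed_discrete {p : Fin N × Fin N | S.A p.1 p.2}).preimage
    (f := fun ω : ℤ → Fin N => (ω n, ω (n + 1))) (by fun_prop)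

instance : CompactSpace (Sig S) :=
  isCompact_iff_compactSpace.1 (isClosed_admissible S).isCompact

instance : SecondCountableTopology (Sig S) :=
  TopologicalSpace.Subtype.secondCountableTopology _

def shiftInv (S : Sys N) (ω : Sig S) : Sig S :=
  ⟨fun n => ω.1 (n - 1), fun n => by simpa using ω.2 (n - 1)⟩

@[simp]
lemma shift_shiftInv (ω : Sig S) : shift S (shiftInv S ω) = ω :=
  Subtype.ext <| funext fun n => by simp [shift, shiftInv]

@[simp]
lemma shiftInv_shift (ω : Sig S) : shiftInv S (shift S ω) = ω :=
  Subtype.ext <| funext fun n => by simp [shift, shiftInv]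

lemma continuous_shift : Continuous (shift S) :=
  continuous_induced_rng.2 <|
    continuous_pi fun n => (continuous_apply (n + 1)).comp continuous_subtype_val

lemma continuous_shiftInv : Continuous (shiftInv S) :=
  continuous_induced_rng.2 <|
    continuous_pi fun n => (continuous_apply (n - 1)).comp continuous_subtype_val

lemma measurable_Fmap (S : Sys N) : Measurable (Fmap S) := by
  have hf : Measurable fun p : Fin N × ℝ => S.f p.1 p.2 :=
    measurable_from_prod_countable_right fun k => S.f_meas k
  have hsym : Continuous fun q : Sig S × ℝ => q.1.1 0 :=
    ((continuous_apply 0).comp continuous_subtype_val).comp continuous_fst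
  exact (continuous_shift.measurable.comp measurable_fst).prodMk
    (hf.comp (hsym.measurable.prodMk measurable_snd))

lemma Fmap_iterate_fst (q : Sig S × ℝ) (n : ℕ) : ((Fmap S)^[n] q).1 = (shift S)^[n] q.1 :=
  (Function.Semiconj.iterate_right (f := Prod.fst) (fun _ => rfl) n) q

/-- The graph transform: `F` maps the graph of `u` onto the graph of `graphTransform S u`. -/
def graphTransform (S : Sys N) (u : Sig S → ℝ) (ω : Sig S) : ℝ :=
  S.f (ω.1 (-1)) (u (shiftInv S ω))

lemma continuous_graphTransform {u : Sig S → ℝ} (hu : Continuous u)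
    (huI : ∀ ω, u ω ∈ Icc (0 : ℝ) 1) : Continuous (graphTransform S u) := by
  have hf : ContinuousOn (fun p : Fin N × ℝ => S.f p.1 p.2) (univ ×ˢ Icc 0 1) :=
    continuousOn_prod_of_discrete_left.2 fun k => (S.f_contDiff k).continuousOn.mono fun _ h => h.2
  exact hf.comp_continuous
    (((continuous_apply (-1)).comp continuous_subtype_val).prodMk (hu.comp continuous_shiftInv))
    fun ω => ⟨mem_univ _, huI _⟩

lemma image_Fmap_strip {u v : Sig S → ℝ} (huI : ∀ ω, u ω ∈ Icc (0 : ℝ) 1)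
    (hvI : ∀ ω, v ω ∈ Icc (0 : ℝ) 1) (huv : ∀ ω, u ω ≤ v ω) :
    Fmap S '' Strip S u v = Strip S (graphTransform S u) (graphTransform S v) := by
  ext ⟨ω, y⟩
  constructor
  · rintro ⟨⟨ω₀, x⟩, ⟨hux, hxv⟩, hq⟩
    obtain ⟨rfl, rfl⟩ := Prod.ext_iff.1 hq
    have hx : x ∈ Icc (0 : ℝ) 1 := ⟨(huI ω₀).1.trans hux, hxv.trans (hvI ω₀).2⟩
    have hsym : (shift S ω₀).1 (-1) = ω₀.1 0 := by simp [shift]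
    simp only [Strip, graphTransform, Fmap, mem_ofPred_eq, shiftInv_shift, hsym]
    exact ⟨(S.f_mono _).monotoneOn (huI ω₀) hx hux, (S.f_mono _).monotoneOn hx (hvI ω₀) hxv⟩
  · rintro ⟨h1, h2⟩
    set ω₀ := shiftInv S ω
    obtain ⟨x, hx, hfx⟩ := intermediate_value_Icc (huv ω₀)
      ((S.f_contDiff _).continuousOn.mono (Icc_subset_Icc (huI ω₀).1 (hvI ω₀).2)) ⟨h1, h2⟩
    refine ⟨(ω₀, x), hx, ?_⟩
    have hsym : ω₀.1 0 = ω.1 (-1) := by simp [ω₀, shiftInv]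
    simp only [Fmap, shift_shiftInv, ω₀, hsym, hfx]

lemma isClosed_strip {u v : Sig S → ℝ} (hu : Continuous u) (hv : Continuous v) :
    IsClosed (Strip S u v) :=
  (isClosed_le (hu.comp continuous_fst) continuous_snd).inter
    (isClosed_le continuous_snd (hv.comp continuous_fst))

noncomputable def fiberSup (B : Set (Sig S × ℝ)) (g : Sig S × ℝ → ℝ) (ω : Sig S) : ℝ :=
  sSup ((fun x => g (ω, x)) '' fiber B ω)

namespace IsStrip

variable {B : Set (Sig S × ℝ)}

lemma image_Fmap (hB : IsStrip S B) : IsStrip S (Fmap S '' B) := by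
  obtain ⟨u, v, hu, hv, huI, hvI, huv, rfl⟩ := hB
  refine ⟨graphTransform S u, graphTransform S v, continuous_graphTransform hu huI,
    continuous_graphTransform hv hvI, fun ω => ?_, fun ω => ?_, fun ω => ?_,
    image_Fmap_strip huI hvI fun ω => (huv ω).le⟩
  · exact Ioo_subset_Icc_self (S.f_into _ (huI _))
  · exact Ioo_subset_Icc_self (S.f_into _ (hvI _))
  · exact S.f_mono _ (huI _) (hvI _) (huv _)

lemma iterate_image_Fmap (hB : IsStrip S B) (n : ℕ) : IsStrip S ((Fmap S)^[n] '' B) := by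
  induction n with
  | zero => simpa using hB
  | succ n ih => simpa only [Function.iterate_succ', image_comp] using ih.image_Fmap

lemma isCompact_fiber (hB : IsStrip S B) (ω : Sig S) : IsCompact (fiber B ω) := by
  obtain ⟨u, v, -, -, -, -, -, rfl⟩ := hB
  exact (isCompact_Icc : IsCompact (Icc (u ω) (v ω)))

lemma fiber_nonempty (hB : IsStrip S B) (ω : Sig S) : (fiber B ω).Nonempty := by
  obtain ⟨u, v, -, -, -, -, huv, rfl⟩ := hB
  exact nonempty_Icc.2 (huv ω).le

lemma fiber_subset_Icc (hB : IsStrip S B) (ω : Sig S) : fiber B ω ⊆ Icc 0 1 := by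
  obtain ⟨u, v, -, -, huI, hvI, -, rfl⟩ := hB
  exact Icc_subset_Icc (huI ω).1 (hvI ω).2

lemma continuous_fiberSup (hB : IsStrip S B) {g : Sig S × ℝ → ℝ} (hg : Continuous g) :
    Continuous (fiberSup B g) := by
  obtain ⟨u, v, hu, hv, -, -, huv, rfl⟩ := hB
  exact continuous_sSup_image_Icc hg hu hv fun ω => (huv ω).le

lemma le_fiberSup (hB : IsStrip S B) {g : Sig S × ℝ → ℝ} (hg : Continuous g)
    {q : Sig S × ℝ} (hq : q ∈ B) : g q ≤ fiberSup B g q.1 :=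
  le_csSup ((hB.isCompact_fiber q.1).image (by fun_prop)).bddAbove ⟨q.2, hq, rfl⟩

lemma abs_fiberSup_le (hB : IsStrip S B) {g : Sig S × ℝ → ℝ} (hg : Continuous g) {M : ℝ}
    (hM : ∀ ω, ∀ x ∈ Icc (0 : ℝ) 1, |g (ω, x)| ≤ M) (ω : Sig S) : |fiberSup B g ω| ≤ M := by
  have hgω : Continuous fun x => g (ω, x) := by fun_prop
  obtain ⟨x, hx, hsup⟩ :=
    ((hB.isCompact_fiber ω).image hgω).sSup_mem ((hB.fiber_nonempty ω).image _)
  rw [fiberSup, ← hsup]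
  exact hM ω x (hB.fiber_subset_Icc ω hx)

lemma stdMeas_pos {ν : Measure (Sig S)} [IsProbabilityMeasure ν] (hB : IsStrip S B) :
    0 < stdMeas S ν B := by
  obtain ⟨u, v, hu, hv, huI, hvI, huv, rfl⟩ := hB
  have hfiber : ∀ ω, volume.restrict (Icc (0 : ℝ) 1) (Prod.mk ω ⁻¹' Strip S u v) =
      ENNReal.ofReal (v ω - u ω) := fun ω => by
    rw [show Prod.mk ω ⁻¹' Strip S u v = Icc (u ω) (v ω) from rfl,
      Measure.restrict_apply measurableSet_Icc,
      inter_eq_self_of_subset_left (Icc_subset_Icc (huI ω).1 (hvI ω).2), Real.volume_Icc]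
  have hmeas : Measurable fun ω => ENNReal.ofReal (v ω - u ω) :=
    ENNReal.measurable_ofReal.comp (hv.sub hu).measurable
  rw [stdMeas, Measure.prod_apply (isClosed_strip hu hv).measurableSet, lintegral_congr hfiber,
    lintegral_pos_iff_support hmeas]
  have hsupp : Function.support (fun ω => ENNReal.ofReal (v ω - u ω)) = univ :=
    eq_univ_of_forall fun ω => by simpa using huv ω
  simp [hsupp]

end IsStrip

lemma fiber_iInter (B : ℕ → Set (Sig S × ℝ)) (ω : Sig S) :
    fiber (⋂ n, B n) ω = ⋂ n, fiber (B n) ω := by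
  ext x
  simp [fiber]

namespace IsTrappingStrip

variable {T : Set (Sig S × ℝ)}

lemma mapsTo (hT : IsTrappingStrip S T) : MapsTo (Fmap S) T T :=
  fun _ hq => interior_subset (hT.2 (mem_image_of_mem _ hq))

lemma tendsto_fiberSup (hT : IsTrappingStrip S T) {g : Sig S × ℝ → ℝ} (hg : Continuous g)
    {ω : Sig S} {x : ℝ} (hω : fiber (Amax S T) ω = {x}) :
    Tendsto (fun n => fiberSup ((Fmap S)^[n] '' T) g ω) atTop (𝓝 (g (ω, x))) :=
  tendsto_sSup_image_of_iInter_eq_singleton (K := fun n => fiber ((Fmap S)^[n] '' T) ω)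
    (fun _ _ hmn _ hy => antitone_iterate_image hT.mapsTo hmn hy)
    (fun n => (hT.1.iterate_image_Fmap n).isCompact_fiber ω)
    (by rw [← fiber_iInter]; exact hω) (by fun_prop)

lemma tendsto_integral_fiberSup {ν : Measure (Sig S)} [IsProbabilityMeasure ν]
    (hT : IsTrappingStrip S T) {g : Sig S × ℝ → ℝ} (hg : Continuous g) {φ : Sig S → ℝ}
    (hgraph : ∀ᵐ ω ∂ν, fiber (Amax S T) ω = {φ ω}) :
    Tendsto (fun n => ∫ ω, fiberSup ((Fmap S)^[n] '' T) g ω ∂ν) atTop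
      (𝓝 (∫ ω, g (ω, φ ω) ∂ν)) := by
  obtain ⟨M, hM⟩ := (isCompact_univ.prod (isCompact_Icc (a := (0 : ℝ)) (b := 1))
    ).exists_bound_of_continuousOn hg.continuousOn
  refine tendsto_integral_of_dominated_convergence (fun _ => M)
    (fun n => ((hT.1.iterate_image_Fmap n).continuous_fiberSup hg).aestronglyMeasurable)
    (integrable_const M) (fun n => ae_of_all _ fun ω => ?_)
    (hgraph.mono fun ω hω => hT.tendsto_fiberSup hg hω)
  exact (hT.1.iterate_image_Fmap n).abs_fiberSup_le hg (fun ω x hx => hM (ω, x) ⟨trivial, hx⟩) ω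

lemma eventually_average_lt {ν : Measure (Sig S)} [IsProbabilityMeasure ν]
    (hT : IsTrappingStrip S T) {φ : Sig S → ℝ} (hgraph : ∀ᵐ ω ∂ν, fiber (Amax S T) ω = {φ ω})
    {q : Sig S × ℝ} (hq : q ∈ T) (hgen : BirkhoffGeneric S ν q.1) (g : C(Sig S × ℝ, ℝ))
    {L : ℝ} (hL : ∫ ω, g (ω, φ ω) ∂ν < L) :
    ∀ᶠ n : ℕ in atTop, (∑ i ∈ Finset.range n, g ((Fmap S)^[i] q)) / n < L := by
  obtain ⟨n, hn⟩ :=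
    ((hT.tendsto_integral_fiberSup g.continuous hgraph).eventually (gt_mem_nhds hL)).exists
  have hB := hT.1.iterate_image_Fmap n
  let G : C(Sig S, ℝ) := ⟨_, hB.continuous_fiberSup g.continuous⟩
  refine eventually_cesaro_lt_of_le (v := fun i => G ((shift S)^[i] q.1)) (n₀ := n)
    (fun i hi => ?_) (hgen G) hn
  rw [← Fmap_iterate_fst]
  exact hB.le_fiberSup g.continuous (antitone_iterate_image hT.mapsTo hi (mem_image_of_mem _ hq))

lemma mem_basin {ν : Measure (Sig S)} [IsProbabilityMeasure ν]
    (hT : IsTrappingStrip S T) {φ : Sig S → ℝ} (hφ : Measurable φ)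
    (hgraph : ∀ᵐ ω ∂ν, fiber (Amax S T) ω = {φ ω})
    {q : Sig S × ℝ} (hq : q ∈ T) (hgen : BirkhoffGeneric S ν q.1) :
    q ∈ Basin S (ν.map fun ω => (ω, φ ω)) := by
  intro g
  have hgm : Measurable fun ω : Sig S => (ω, φ ω) := measurable_id.prodMk hφ
  rw [integral_map hgm.aemeasurable g.continuous.aestronglyMeasurable]
  refine tendsto_order.2 ⟨fun L hL => ?_, fun L hL => hT.eventually_average_lt hgraph hq hgen g hL⟩
  have hneg := hT.eventually_average_lt hgraph hq hgen (-g) (L := -L)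
    (by simpa [integral_neg] using neg_lt_neg hL)
  refine hneg.mono fun n hn => ?_
  simp only [ContinuousMap.neg_apply, Finset.sum_neg_distrib, neg_div] at hn
  linarith

end IsTrappingStrip

lemma map_graph_invariant {ν : Measure (Sig S)} (hσ : MeasurePreserving (shift S) ν ν)
    {T : Set (Sig S × ℝ)} (hT : MapsTo (Fmap S) T T) {φ : Sig S → ℝ} (hφ : Measurable φ)
    (hgraph : ∀ᵐ ω ∂ν, fiber (Amax S T) ω = {φ ω}) :
    (ν.map fun ω => (ω, φ ω)).map (Fmap S) = ν.map fun ω => (ω, φ ω) := by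
  have hgraph' : ∀ᵐ ω ∂ν, fiber (Amax S T) (shift S ω) = {φ (shift S ω)} :=
    hσ.quasiMeasurePreserving.ae hgraph
  have hcomm : (fun ω => Fmap S (ω, φ ω)) =ᵐ[ν] fun ω => (shift S ω, φ (shift S ω)) := by
    filter_upwards [hgraph, hgraph'] with ω h h'
    have hmem : Fmap S (ω, φ ω) ∈ Amax S T :=
      mapsTo_iInter_iterate_image hT (show φ ω ∈ fiber (Amax S T) ω by simp [h])
    have : S.f (ω.1 0) (φ ω) ∈ fiber (Amax S T) (shift S ω) := hmem
    rw [h', mem_singleton_iff] at this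
    simp [Fmap, this]
  have hgm : Measurable fun ω : Sig S => (ω, φ ω) := measurable_id.prodMk hφ
  calc (ν.map fun ω => (ω, φ ω)).map (Fmap S)
      = ν.map ((fun ω => (ω, φ ω)) ∘ shift S) := by
        rw [Measure.map_map (measurable_Fmap S) hgm]
        exact Measure.map_congr hcomm
    _ = ν.map fun ω => (ω, φ ω) := by
        rw [← Measure.map_map hgm continuous_shift.measurable, hσ.map_eq]

lemma ae_birkhoffGeneric {ν : Measure (Sig S)} [IsProbabilityMeasure ν]
    (hσ : Ergodic (shift S) ν) : ∀ᵐ ω ∂ν, BirkhoffGeneric S ν ω :=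
  (ae_forall_tendsto_birkhoffAverage hσ).mono fun _ h g => by
    simpa [birkhoffAverage, birkhoffSum, div_eq_inv_mul] using h g

theorem statement17_general {N : ℕ} (S : Sys N)
    (ν : Measure (Sig S)) (hν : IsMarkovMeasure S ν) (hνerg : Ergodic (shift S) ν)
    (T : Set (Sig S × ℝ)) (hT : IsTrappingStrip S T)
    (φ : Sig S → ℝ) (hφ : Measurable φ)
    (hgraph : ∀ᵐ ω ∂ν, fiber (Amax S T) ω = {φ ω}) :
    (ν.map fun ω => (ω, φ ω)).map (Fmap S) = (ν.map fun ω => (ω, φ ω)) ∧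
    (∀ q ∈ T, BirkhoffGeneric S ν q.1 → q ∈ Basin S (ν.map fun ω => (ω, φ ω))) ∧
    stdMeas S ν (T \ Basin S (ν.map fun ω => (ω, φ ω))) = 0 ∧
    0 < stdMeas S ν (Basin S (ν.map fun ω => (ω, φ ω))) := by
  have : IsProbabilityMeasure ν := hν.1
  have hbasin : ∀ q ∈ T, BirkhoffGeneric S ν q.1 → q ∈ Basin S (ν.map fun ω => (ω, φ ω)) :=
    fun q hq hgen => hT.mem_basin hφ hgraph hq hgen
  have hnull : stdMeas S ν (T \ Basin S (ν.map fun ω => (ω, φ ω))) = 0 := by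
    refine measure_mono_null (t := {ω | ¬BirkhoffGeneric S ν ω} ×ˢ univ)
      (fun q ⟨hqT, hqB⟩ => ⟨fun hgen => hqB (hbasin q hqT hgen), trivial⟩) ?_
    rw [stdMeas, Measure.prod_prod, ae_iff.1 (ae_birkhoffGeneric hνerg), zero_mul]
  refine ⟨map_graph_invariant hνerg.toMeasurePreserving hT.mapsTo hφ hgraph, hbasin, hnull, ?_⟩
  calc 0 < stdMeas S ν T := hT.1.stdMeas_pos
    _ ≤ stdMeas S ν (T ∩ Basin S _) + stdMeas S ν (T \ Basin S _) :=
        measure_le_inter_add_sdiff _ _ _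
    _ ≤ stdMeas S ν (Basin S (ν.map fun ω => (ω, φ ω))) := by
        rw [hnull, add_zero]
        exact measure_mono inter_subset_right

/-- the lift `m_φ` of `ν` to the graph part of the CBG attractor of a trapping
strip is an invariant SRB measure; its basin contains every point of the strip with
Birkhoff-generic base coordinate, hence a full standard measure subset of the strip. -/
theorem statement17 {N : ℕ} (S : Sys N)
    (ν : Measure (Sig S)) (hν : IsMarkovMeasure S ν) (hνerg : Ergodic (shift S) ν)
    (T : Set (Sig S × ℝ)) (hT : IsTrappingStrip S T)
    (hCBG : IsCBG S ν (Amax S T)) (φ : Sig S → ℝ) (hφ : Measurable φ)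
    (hgraph : ∀ᵐ ω ∂ν, fiber (Amax S T) ω = {φ ω}) :
    (ν.map fun ω => (ω, φ ω)).map (Fmap S) = (ν.map fun ω => (ω, φ ω)) ∧
    (∀ q ∈ T, BirkhoffGeneric S ν q.1 → q ∈ Basin S (ν.map fun ω => (ω, φ ω))) ∧
    stdMeas S ν (T \ Basin S (ν.map fun ω => (ω, φ ω))) = 0 ∧
    0 < stdMeas S ν (Basin S (ν.map fun ω => (ω, φ ω))) :=
  statement17_general S ν hν hνerg T hT φ hφ hgraph

end PaperSSP
end
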